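/- Moment generating function bound for blocked dependent sums: let (ℱ_t)_{t∈ℕ} be a filtration (with ℱ_t trivial for t ≤ 0), let d, K ≥ 1 and n = K·d, and let X_1,…,X_n be real random variables such that each X_t is ℱ_t-measurable, |X_t| ≤ 1 almost surely, and E[X_t | ℱ_{t−d}] ≤ φ almost surely for some φ ≥ 0. Then for every λ > 0, E[exp(λ·Σ_{t=1}^n X_t)] ≤ exp(n·(λ²d/2 + λφ)). -/

import Mathlib

/-!
Split `∑_{t ≤ Kd} X_t` into the `d` arithmetic progressions `j, j + d, …, j + (K - 1)d`. By
convexity of `exp`, `E exp(λ ∑ X)` is at most the average over `j` of `E exp(λd ∑_i X_{j+id})`.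
Along one progression the conditioning σ-algebra `ℱ_{t-d}` already contains all earlier terms, so
the progression is a predictable sequence with conditional means `≤ φ`; peeling off the last term
with `E[e^{sX} | ℱ] ≤ cosh s + φ sinh s ≤ e^{s²/2 + sφ}` (chord bound for `exp` on `[-s, s]`)
gives `E exp(s ∑_i X_{j+id}) ≤ exp(K(s²/2 + sφ))` with `s = λd`.
-/

open MeasureTheory Finset Real

theorem Real.sinh_le_mul_cosh {s : ℝ} (hs : 0 ≤ s) : sinh s ≤ s * cosh s := by
  have hderiv (x : ℝ) : HasDerivAt (fun y => y * cosh y - sinh y) (x * sinh x) x :=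
    (((hasDerivAt_id' x).mul (hasDerivAt_cosh x)).sub (hasDerivAt_sinh x)).congr_deriv (by ring)
  have hmono : Monotone (fun y => y * cosh y - sinh y) := by
    refine monotone_of_deriv_nonneg (fun x => (hderiv x).differentiableAt) fun x => ?_
    rw [(hderiv x).deriv]
    rcases le_total 0 x with hx | hx
    · exact mul_nonneg hx (sinh_nonneg_iff.2 hx)
    · exact mul_nonneg_of_nonpos_of_nonpos hx (sinh_nonpos_iff.2 hx)
  simpa using hmono hs

theorem Real.cosh_add_mul_sinh_le_exp {s φ : ℝ} (hs : 0 ≤ s) (hφ : 0 ≤ φ) :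
    cosh s + φ * sinh s ≤ exp (s ^ 2 / 2 + s * φ) := by
  have hsinh : φ * sinh s ≤ φ * (s * cosh s) := by gcongr; exact sinh_le_mul_cosh hs
  calc cosh s + φ * sinh s ≤ cosh s * (1 + s * φ) := by linarith
    _ ≤ exp (s ^ 2 / 2) * exp (s * φ) := by
      gcongr
      · exact cosh_le_exp_half_sq s
      · linarith [add_one_le_exp (s * φ)]
    _ = exp (s ^ 2 / 2 + s * φ) := (exp_add _ _).symm

theorem Real.exp_sum_div_card_le {ι : Type*} {J : Finset ι} (hJ : J.Nonempty) (a : ι → ℝ) :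
    exp ((∑ j ∈ J, a j) / #J) ≤ (∑ j ∈ J, exp (a j)) / #J := by
  have hw : ∑ _j ∈ J, (#J : ℝ)⁻¹ = 1 := by simp [hJ.card_ne_zero]
  have h := convexOn_exp.map_sum_le (fun _ _ => by positivity) hw fun j _ => Set.mem_univ (a j)
  simpa [smul_eq_mul, ← mul_sum, div_eq_inv_mul] using h

theorem Finset.sum_Icc_one_mul_eq_sum_Icc_sum_range {M : Type*} [AddCommMonoid M] (f : ℕ → M)
    (K d : ℕ) : ∑ t ∈ Icc 1 (K * d), f t = ∑ j ∈ Icc 1 d, ∑ i ∈ range K, f (j + i * d) := by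
  induction K with
  | zero => simp
  | succ K ih =>
    have hIcc (m : ℕ) : Icc 1 m = Ioc 0 m := Icc_succ_left_eq_Ioc 0 m
    have hblock : ∑ t ∈ Ioc (K * d) (K * d + d), f t = ∑ j ∈ Icc 1 d, f (j + K * d) := by
      rw [← Icc_add_one_left_eq_Ioc, ← map_add_left_Icc, sum_map]
      simp [add_comm]
    rw [add_mul, one_mul, hIcc, ← sum_Ioc_consecutive f (Nat.zero_le _) (Nat.le_add_right _ _),
      ← hIcc, ih, hblock, ← sum_add_distrib]
    simp only [sum_range_succ]

theorem Finset.add_mul_mem_Icc_one_mul {j i d K : ℕ} (hj : j ∈ Icc 1 d) (hi : i < K) :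
    j + i * d ∈ Icc 1 (K * d) := by
  obtain ⟨hj1, hjd⟩ := mem_Icc.1 hj
  refine mem_Icc.2 ⟨by omega, ?_⟩
  calc j + i * d ≤ (i + 1) * d := by rw [add_mul, one_mul]; omega
    _ ≤ K * d := Nat.mul_le_mul_right d hi

namespace MeasureTheory

def Filtration.reindex {Ω ι κ : Type*} [Preorder ι] [Preorder κ] {m : MeasurableSpace Ω}
    (ℱ : Filtration ι m) (f : κ → ι) (hf : Monotone f) : Filtration κ m where
  seq k := ℱ (f k)
  mono' _ _ h := ℱ.mono (hf h)
  le' k := ℱ.le (f k)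

variable {Ω : Type*} {m mΩ : MeasurableSpace Ω} {μ : Measure Ω}

theorem integrable_exp_mul_of_ae_abs_le [IsFiniteMeasure μ] {Z : Ω → ℝ} {C : ℝ}
    (hZ : AEMeasurable Z μ) (hC : ∀ᵐ ω ∂μ, |Z ω| ≤ C) (s : ℝ) :
    Integrable (fun ω => exp (s * Z ω)) μ := by
  refine .of_bound (measurable_exp.comp_aemeasurable (hZ.const_mul s)).aestronglyMeasurable
    (exp (|s| * C)) ?_
  filter_upwards [hC] with ω hω
  rw [norm_of_nonneg (exp_pos _).le, exp_le_exp]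
  calc s * Z ω ≤ |s * Z ω| := le_abs_self _
    _ = |s| * |Z ω| := abs_mul _ _
    _ ≤ |s| * C := mul_le_mul_of_nonneg_left hω (abs_nonneg s)

theorem ae_abs_sum_le_card {ι : Type*} {I : Finset ι} {Y : ι → Ω → ℝ}
    (hY : ∀ i ∈ I, ∀ᵐ ω ∂μ, |Y i ω| ≤ 1) : ∀ᵐ ω ∂μ, |∑ i ∈ I, Y i ω| ≤ #I := by
  filter_upwards [(Filter.eventually_all_finset I).2 hY] with ω hω
  calc |∑ i ∈ I, Y i ω| ≤ ∑ i ∈ I, |Y i ω| := abs_sum_le_sum_abs _ _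
    _ ≤ #I := by simpa using sum_le_card_nsmul I _ 1 hω

theorem integrable_exp_mul_sum [IsFiniteMeasure μ] {ι : Type*} {I : Finset ι} {Y : ι → Ω → ℝ}
    (hmeas : ∀ i ∈ I, AEMeasurable (Y i) μ) (hY : ∀ i ∈ I, ∀ᵐ ω ∂μ, |Y i ω| ≤ 1) (s : ℝ) :
    Integrable (fun ω => exp (s * ∑ i ∈ I, Y i ω)) μ :=
  integrable_exp_mul_of_ae_abs_le (I.aemeasurable_fun_sum hmeas) (ae_abs_sum_le_card hY) s

theorem integral_exp_sum_div_card_le {ι : Type*} {J : Finset ι} (hJ : J.Nonempty)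
    {B : ι → Ω → ℝ} (hB : ∀ j ∈ J, Integrable (fun ω => exp (B j ω)) μ) :
    ∫ ω, exp ((∑ j ∈ J, B j ω) / #J) ∂μ ≤ (∑ j ∈ J, ∫ ω, exp (B j ω) ∂μ) / #J := by
  rw [← integral_finsetSum J hB, ← integral_div]
  exact integral_mono_of_nonneg (.of_forall fun _ => (exp_pos _).le)
    ((integrable_finsetSum J hB).div_const _) (.of_forall fun ω => exp_sum_div_card_le hJ _)

theorem integral_mul_le_of_condExp_le [IsFiniteMeasure μ] (hm : m ≤ mΩ) {f g : Ω → ℝ} {c : ℝ}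
    (hf : StronglyMeasurable[m] f) (hf0 : 0 ≤ᵐ[μ] f) (hfi : Integrable f μ) (hg : Integrable g μ)
    (hfg : Integrable (fun ω => f ω * g ω) μ) (hgc : μ[g | m] ≤ᵐ[μ] fun _ => c) :
    ∫ ω, f ω * g ω ∂μ ≤ c * ∫ ω, f ω ∂μ := by
  have hpull : μ[f * g | m] =ᵐ[μ] f * μ[g | m] := condExp_mul_of_stronglyMeasurable_left hf hfg hg
  calc ∫ ω, f ω * g ω ∂μ = ∫ ω, μ[f * g | m] ω ∂μ := (integral_condExp hm).symm
    _ = ∫ ω, f ω * μ[g | m] ω ∂μ := integral_congr_ae hpull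
    _ ≤ ∫ ω, f ω * c ∂μ := by
      refine integral_mono_ae (integrable_condExp.congr hpull) (hfi.mul_const c) ?_
      filter_upwards [hf0, hgc] with ω h0 hc
      exact mul_le_mul_of_nonneg_left hc h0
    _ = c * ∫ ω, f ω ∂μ := by rw [integral_mul_const, mul_comm]

theorem condExp_exp_mul_le [IsFiniteMeasure μ] (hm : m ≤ mΩ) {Y : Ω → ℝ} {s φ : ℝ}
    (hs : 0 ≤ s) (hφ : 0 ≤ φ) (hY : AEMeasurable Y μ) (hbdd : ∀ᵐ ω ∂μ, |Y ω| ≤ 1)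
    (hcond : μ[Y | m] ≤ᵐ[μ] fun _ => φ) :
    μ[fun ω => exp (s * Y ω) | m] ≤ᵐ[μ] fun _ => exp (s ^ 2 / 2 + s * φ) := by
  have hYi : Integrable Y μ := .of_bound hY.aestronglyMeasurable 1 (by simpa using hbdd)
  have hchord : (fun ω => exp (s * Y ω)) ≤ᵐ[μ] (fun _ => cosh s) + sinh s • Y := by
    filter_upwards [hbdd] with ω hω
    simpa [mul_comm] using exp_mul_le_cosh_add_mul_sinh hω s
  have hlin :
      μ[(fun _ => cosh s) + sinh s • Y | m] =ᵐ[μ] (fun _ => cosh s) + sinh s • μ[Y | m] := by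
    filter_upwards [condExp_add (integrable_const _) (hYi.smul (sinh s)) m,
      condExp_smul (sinh s) Y m] with ω h1 h2
    rw [h1, Pi.add_apply, condExp_const hm, h2]; rfl
  filter_upwards [condExp_mono (m := m) (integrable_exp_mul_of_ae_abs_le hY hbdd s)
    ((integrable_const _).add (hYi.smul _)) hchord, hlin, hcond] with ω h1 h2 h3
  calc μ[fun ω => exp (s * Y ω) | m] ω ≤ cosh s + sinh s * μ[Y | m] ω := by
        simpa [h2] using h1
    _ ≤ cosh s + φ * sinh s := by
      have := mul_le_mul_of_nonneg_left h3 (sinh_nonneg_iff.2 hs)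
      linarith
    _ ≤ exp (s ^ 2 / 2 + s * φ) := cosh_add_mul_sinh_le_exp hs hφ

theorem integral_exp_mul_sum_range_le [IsProbabilityMeasure μ] {G : Filtration ℕ mΩ}
    {Y : ℕ → Ω → ℝ} {k : ℕ} {s φ : ℝ} (hs : 0 ≤ s) (hφ : 0 ≤ φ)
    (hY : ∀ i < k, Measurable[G (i + 1)] (Y i)) (hbdd : ∀ i < k, ∀ᵐ ω ∂μ, |Y i ω| ≤ 1)
    (hcond : ∀ i < k, μ[Y i | G i] ≤ᵐ[μ] fun _ => φ) :
    ∫ ω, exp (s * ∑ i ∈ range k, Y i ω) ∂μ ≤ exp (k * (s ^ 2 / 2 + s * φ)) := by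
  induction k with
  | zero => simp
  | succ k ih =>
    have hmeas (i : ℕ) (hi : i ∈ range (k + 1)) : Measurable (Y i) :=
      (hY i (mem_range.1 hi)).mono (G.le _) le_rfl
    have hint {l : ℕ} (hl : l ≤ k + 1) : Integrable (fun ω => exp (s * ∑ i ∈ range l, Y i ω)) μ :=
      integrable_exp_mul_sum (fun i hi => (hmeas i (range_subset_range.2 hl hi)).aemeasurable)
        (fun i hi => hbdd i (by grind)) s
    have hpast : StronglyMeasurable[G k] (fun ω => exp (s * ∑ i ∈ range k, Y i ω)) := by
      refine (((range k).measurable_fun_sum fun i hi => ?_).const_mul s).exp.stronglyMeasurable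
      exact (hY i (by grind)).mono (G.mono (by grind)) le_rfl
    have hYk : AEMeasurable (Y k) μ := (hmeas k (self_mem_range_succ k)).aemeasurable
    have hbddk := hbdd k (Nat.lt_add_one k)
    have hlast := condExp_exp_mul_le (G.le k) hs hφ hYk hbddk (hcond k (Nat.lt_add_one k))
    calc ∫ ω, exp (s * ∑ i ∈ range (k + 1), Y i ω) ∂μ
        = ∫ ω, exp (s * ∑ i ∈ range k, Y i ω) * exp (s * Y k ω) ∂μ := by
          simp only [sum_range_succ, mul_add, exp_add]
      _ ≤ exp (s ^ 2 / 2 + s * φ) * ∫ ω, exp (s * ∑ i ∈ range k, Y i ω) ∂μ := by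
        refine integral_mul_le_of_condExp_le (G.le k) hpast (.of_forall fun _ => (exp_pos _).le)
          (hint k.le_succ) (integrable_exp_mul_of_ae_abs_le hYk hbddk s) ?_ hlast
        simpa only [sum_range_succ, mul_add, exp_add] using hint le_rfl
      _ ≤ exp (s ^ 2 / 2 + s * φ) * exp (k * (s ^ 2 / 2 + s * φ)) := by
        gcongr
        exact ih (fun i hi => hY i (by omega)) (fun i hi => hbdd i (by omega))
          (fun i hi => hcond i (by omega))
      _ = exp ((k + 1 : ℕ) * (s ^ 2 / 2 + s * φ)) := by
        rw [← exp_add]; push_cast; ring_nf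

theorem integral_exp_mul_sum_progression_le [IsProbabilityMeasure μ] {ℱ : Filtration ℕ mΩ}
    {X : ℕ → Ω → ℝ} {j d K : ℕ} {s φ : ℝ} (hs : 0 ≤ s) (hφ : 0 ≤ φ)
    (hX : ∀ i < K, Measurable[ℱ (j + i * d)] (X (j + i * d)))
    (hbdd : ∀ i < K, ∀ᵐ ω ∂μ, |X (j + i * d) ω| ≤ 1)
    (hcond : ∀ i < K, μ[X (j + i * d) | ℱ (j + i * d - d)] ≤ᵐ[μ] fun _ => φ) :
    ∫ ω, exp (s * ∑ i ∈ range K, X (j + i * d) ω) ∂μ ≤ exp (K * (s ^ 2 / 2 + s * φ)) := by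
  have hmono : Monotone fun i => j + i * d - d := fun a b h => Nat.sub_le_sub_right (by gcongr) d
  refine integral_exp_mul_sum_range_le (G := ℱ.reindex _ hmono) hs hφ (fun i hi => ?_) hbdd hcond
  show Measurable[ℱ (j + (i + 1) * d - d)] _
  rw [add_mul, one_mul, ← add_assoc, Nat.add_sub_cancel]
  exact hX i hi

end MeasureTheory

theorem mgf_bound_blocked_sums_general
    {Ω : Type*} [mΩ : MeasurableSpace Ω] (ℙ : Measure Ω) [IsProbabilityMeasure ℙ]
    (ℱ : Filtration ℕ mΩ)
    (d K n : ℕ) (hd : 1 ≤ d) (hn : n = K * d)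
    (X : ℕ → Ω → ℝ)
    (hXmeas : ∀ t, 1 ≤ t → t ≤ n → Measurable[ℱ t] (X t))
    (hXbdd : ∀ t, 1 ≤ t → t ≤ n → ∀ᵐ ω ∂ℙ, |X t ω| ≤ 1)
    (φ : ℝ) (hφ : 0 ≤ φ)
    (hcond : ∀ t, 1 ≤ t → t ≤ n → ℙ[X t | ℱ (t - d)] ≤ᵐ[ℙ] fun _ => φ)
    (lam : ℝ) (hlam : 0 < lam) :
    ∫ ω, Real.exp (lam * ∑ t ∈ Finset.Icc 1 n, X t ω) ∂ℙ
      ≤ Real.exp (n * (lam ^ 2 * d / 2 + lam * φ)) := by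
  subst hn
  have hs : 0 ≤ lam * d := by positivity
  have hmem {j i : ℕ} (hj : j ∈ Icc 1 d) (hi : i < K) : 1 ≤ j + i * d ∧ j + i * d ≤ K * d :=
    mem_Icc.1 (add_mul_mem_Icc_one_mul hj hi)
  have hint (j : ℕ) (hj : j ∈ Icc 1 d) :
      Integrable (fun ω => exp (lam * d * ∑ i ∈ range K, X (j + i * d) ω)) ℙ := by
    refine integrable_exp_mul_sum (fun i hi => ?_) (fun i hi => ?_) _ <;>
      obtain ⟨h1, h2⟩ := hmem hj (mem_range.1 hi)
    exacts [((hXmeas _ h1 h2).mono (ℱ.le _) le_rfl).aemeasurable, hXbdd _ h1 h2]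
  have hblock (j : ℕ) (hj : j ∈ Icc 1 d) :
      ∫ ω, exp (lam * d * ∑ i ∈ range K, X (j + i * d) ω) ∂ℙ
        ≤ exp (K * ((lam * d) ^ 2 / 2 + lam * d * φ)) :=
    integral_exp_mul_sum_progression_le hs hφ (fun i hi => hXmeas _ (hmem hj hi).1 (hmem hj hi).2)
      (fun i hi => hXbdd _ (hmem hj hi).1 (hmem hj hi).2)
      (fun i hi => hcond _ (hmem hj hi).1 (hmem hj hi).2)
  have hcard : (#(Icc 1 d) : ℝ) = d := by simp
  have hd' : (d : ℝ) ≠ 0 := by positivity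
  calc ∫ ω, exp (lam * ∑ t ∈ Icc 1 (K * d), X t ω) ∂ℙ
      = ∫ ω, exp ((∑ j ∈ Icc 1 d, lam * d * ∑ i ∈ range K, X (j + i * d) ω) / #(Icc 1 d))
          ∂ℙ := by
        simp_rw [sum_Icc_one_mul_eq_sum_Icc_sum_range, ← mul_sum, hcard]
        congr with ω
        field_simp
    _ ≤ (∑ j ∈ Icc 1 d, ∫ ω, exp (lam * d * ∑ i ∈ range K, X (j + i * d) ω) ∂ℙ) / #(Icc 1 d) :=
        integral_exp_sum_div_card_le (nonempty_Icc.2 hd) hint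
    _ ≤ (∑ _j ∈ Icc 1 d, exp (K * ((lam * d) ^ 2 / 2 + lam * d * φ))) / #(Icc 1 d) := by
        gcongr with j hj; exact hblock j hj
    _ = exp ((K * d : ℕ) * (lam ^ 2 * d / 2 + lam * φ)) := by
      rw [sum_const, nsmul_eq_mul, hcard, mul_div_cancel_left₀ _ hd']
      push_cast; ring_nf

/-- **Moment generating function bound for blocked dependent sums.** Let `(ℱ t)` be a
filtration (trivial at time `0`), `d, K ≥ 1`, `n = K·d`, and `X 1, …, X n` real random
variables with `X t` `ℱ t`-measurable, `|X t| ≤ 1` a.s., and `E[X t | ℱ (t−d)] ≤ φ` a.s.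
for some `φ ≥ 0`. Then for every `λ > 0`,
`E[exp(λ ∑ₜ X t)] ≤ exp(n (λ² d / 2 + λ φ))`. -/
theorem mgf_bound_blocked_sums
    {Ω : Type*} [mΩ : MeasurableSpace Ω] (ℙ : Measure Ω) [IsProbabilityMeasure ℙ]
    (ℱ : Filtration ℕ mΩ) (hℱtriv : ℱ 0 = ⊥)
    (d K n : ℕ) (hd : 1 ≤ d) (hK : 1 ≤ K) (hn : n = K * d)
    (X : ℕ → Ω → ℝ)
    (hXmeas : ∀ t, 1 ≤ t → t ≤ n → Measurable[ℱ t] (X t))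
    (hXbdd : ∀ t, 1 ≤ t → t ≤ n → ∀ᵐ ω ∂ℙ, |X t ω| ≤ 1)
    (φ : ℝ) (hφ : 0 ≤ φ)
    (hcond : ∀ t, 1 ≤ t → t ≤ n → ℙ[X t | ℱ (t - d)] ≤ᵐ[ℙ] fun _ => φ)
    (lam : ℝ) (hlam : 0 < lam) :
    ∫ ω, Real.exp (lam * ∑ t ∈ Finset.Icc 1 n, X t ω) ∂ℙ
      ≤ Real.exp (n * (lam ^ 2 * d / 2 + lam * φ)) :=
  mgf_bound_blocked_sums_general (mΩ := mΩ) ℙ ℱ d K n hd hn X hXmeas hXbdd φ hφ hcond lam hlam
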